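/- arXiv:2409.20490 — 2 statements merged into one kernel-verified Lean document; each statement's English description precedes it below -/
import Mathlib

section
/- Let $\lambda_e, \lambda > 0$ and $n \ge 4$. Suppose a sequence of nonnegative reals $w_1, w_2, \ldots, w_{n-2}$ satisfies, for each $1 \le i \le n-3$, the inequality $w_i \le \frac{2\lambda_e}{\lambda} \cdot \frac{1}{n-i-1} + \frac{n-i-2}{n-i-1} w_{i+1}$, and $w_{n-2} \le \frac{2\lambda_e}{\lambda}$. Then $w_1 \le \frac{2\lambda_e}{\lambda} \cdot \frac{n-3}{n-2} + \frac{1}{n-2} w_{n-2} \le \frac{2\lambda_e}{\lambda}$. -/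
theorem stmt4 (lamE lam : ℝ) (hE : 0 < lamE) (hl : 0 < lam)
    (n : ℕ) (hn : 4 ≤ n) (w : ℕ → ℝ)
    (hw : ∀ i, 1 ≤ i → i ≤ n - 2 → 0 ≤ w i)
    (hrec : ∀ i, 1 ≤ i → i ≤ n - 3 →
      w i ≤ (2 * lamE / lam) * (1 / ((n : ℝ) - i - 1)) +
        (((n : ℝ) - i - 2) / ((n : ℝ) - i - 1)) * w (i + 1))
    (hlast : w (n - 2) ≤ 2 * lamE / lam) :
    w 1 ≤ (2 * lamE / lam) * (((n : ℝ) - 3) / ((n : ℝ) - 2)) + (1 / ((n : ℝ) - 2)) * w (n - 2)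
      ∧ w 1 ≤ 2 * lamE / lam := by
  set C := 2 * lamE / lam with hC
  have hCpos : 0 < C := by positivity
  have key : ∀ d, ∀ i, 1 ≤ i → i + d = n - 2 →
      w i ≤ C * (((n : ℝ) - i - 2) / ((n : ℝ) - i - 1)) +
        (1 / ((n : ℝ) - i - 1)) * w (n - 2) := by
    intro d
    induction d with
    | zero =>
      intro i hi hieq
      have : i = n - 2 := by omega
      subst this
      have hcast : ((n - 2 : ℕ) : ℝ) = (n : ℝ) - 2 := by
        have : (2:ℕ) ≤ n := by omega
        push_cast [Nat.cast_sub this]; ring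
      rw [hcast]
      have h1 : (n : ℝ) - ((n : ℝ) - 2) - 1 = 1 := by ring
      have h2 : (n : ℝ) - ((n : ℝ) - 2) - 2 = 0 := by ring
      rw [h1, h2]
      norm_num
    | succ d ih =>
      intro i hi hieq
      have hile : i ≤ n - 3 := by omega
      have hrec' := hrec i hi hile
      have ih' := ih (i + 1) (by omega) (by omega)
      have hcast : ((i + 1 : ℕ) : ℝ) = (i : ℝ) + 1 := by push_cast; ring
      rw [hcast] at ih'
      -- positivity facts
      have hi3 : (i : ℝ) ≤ (n : ℝ) - 3 := by
        have : (i : ℝ) ≤ ((n - 3 : ℕ) : ℝ) := by exact_mod_cast hile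
        have h3 : ((n - 3 : ℕ) : ℝ) = (n : ℝ) - 3 := by
          have : (3:ℕ) ≤ n := by omega
          push_cast [Nat.cast_sub this]; ring
        linarith [h3 ▸ this]
      have hA : (0:ℝ) < (n : ℝ) - i - 2 := by linarith
      have hB : (0:ℝ) < (n : ℝ) - i - 1 := by linarith
      have step : ((n : ℝ) - i - 2) / ((n : ℝ) - i - 1) * w (i + 1) ≤
          ((n : ℝ) - i - 2) / ((n : ℝ) - i - 1) *
            (C * (((n : ℝ) - ((i:ℝ)+1) - 2) / ((n : ℝ) - ((i:ℝ)+1) - 1)) +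
              (1 / ((n : ℝ) - ((i:ℝ)+1) - 1)) * w (n - 2)) := by
        apply mul_le_mul_of_nonneg_left ih' (by positivity)
      have heq : C * (1 / ((n : ℝ) - i - 1)) +
          ((n : ℝ) - i - 2) / ((n : ℝ) - i - 1) *
            (C * (((n : ℝ) - ((i:ℝ)+1) - 2) / ((n : ℝ) - ((i:ℝ)+1) - 1)) +
              (1 / ((n : ℝ) - ((i:ℝ)+1) - 1)) * w (n - 2)) =
          C * (((n : ℝ) - i - 2) / ((n : ℝ) - i - 1)) +
            (1 / ((n : ℝ) - i - 1)) * w (n - 2) := by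
        have h1 : (n : ℝ) - ((i:ℝ)+1) - 1 = (n : ℝ) - i - 2 := by ring
        rw [h1]
        field_simp
        ring
      calc w i ≤ _ := hrec'
        _ ≤ _ := by linarith [step]
        _ = _ := heq
  have h1 := key (n - 3) 1 le_rfl (by omega)
  have hone : ((1:ℕ) : ℝ) = 1 := by norm_num
  rw [hone] at h1
  have he1 : (n : ℝ) - 1 - 2 = (n : ℝ) - 3 := by ring
  have he2 : (n : ℝ) - 1 - 1 = (n : ℝ) - 2 := by ring
  rw [he1, he2] at h1
  refine ⟨h1, ?_⟩
  have hn2 : (0:ℝ) < (n : ℝ) - 2 := by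
    have : (4:ℝ) ≤ (n:ℝ) := by exact_mod_cast hn
    linarith
  have h2 : (1 / ((n : ℝ) - 2)) * w (n - 2) ≤ (1 / ((n : ℝ) - 2)) * C := by
    apply mul_le_mul_of_nonneg_left hlast (by positivity)
  have h3 : C * (((n : ℝ) - 3) / ((n : ℝ) - 2)) + (1 / ((n : ℝ) - 2)) * C = C := by
    field_simp; ring
  linarith
end

section
/- In the recursive system $v_S = \frac{\lambda_e + \sum_{i\in N(S)}\mu_i(S) v_{S\cup\{i\}}}{\lambda_0(S)+\sum_{i\in N(S)}\mu_i(S)}$, defined by downward induction on the size of the complement of $S$, with all rates nonnegative, $\lambda_e > 0$, $\lambda_0(\mathcal{N}) > 0$ and $\lambda_0(S)+\sum_{i\in N(S)}\mu_i(S) > 0$ for all $S$: every $v_S$ satisfies $v_S \ge \lambda_e/\lambda_0$, where $\lambda_0 = \lambda_0(\mathcal{N})$ is the total source rate. -/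
open Finset

/-- In the version-age recursive system, every `v S` is at least `λₑ/λ₀`,
where `λ₀ = λ₀(𝒩)` is the total source rate. -/
theorem stmt16 (n : ℕ) (hn : 1 ≤ n) (lamE : ℝ) (hE : 0 < lamE)
    (r : Fin n → ℝ) (hr : ∀ i, 0 ≤ r i) (hrpos : 0 < ∑ i, r i)
    (μ : Fin n → Finset (Fin n) → ℝ) (hμ : ∀ i S, 0 ≤ μ i S)
    (N : Finset (Fin n) → Finset (Fin n)) (hN : ∀ S i, i ∈ N S → i ∉ S)
    (v : Finset (Fin n) → ℝ)
    (hden : ∀ S : Finset (Fin n), S.Nonempty →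
      0 < (∑ i ∈ S, r i) + ∑ i ∈ N S, μ i S)
    (hrec : ∀ S : Finset (Fin n), S.Nonempty →
      v S = (lamE + ∑ i ∈ N S, μ i S * v (insert i S)) /
            ((∑ i ∈ S, r i) + ∑ i ∈ N S, μ i S)) :
    ∀ S : Finset (Fin n), S.Nonempty → lamE / (∑ i, r i) ≤ v S := by
  have hc0 : 0 ≤ lamE / (∑ i, r i) := div_nonneg hE.le hrpos.le
  suffices key : ∀ k : ℕ, ∀ S : Finset (Fin n), S.Nonempty → n - S.card ≤ k →
      lamE / (∑ i, r i) ≤ v S by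
    intro S hS
    exact key n S hS (by omega)
  intro k
  induction k with
  | zero =>
    intro S hS hcard
    have hcardle : S.card ≤ n := by
      simpa using Finset.card_le_card (Finset.subset_univ S)
    have hSuniv : S = Finset.univ := Finset.eq_univ_of_card S (by simpa using by omega)
    have hNempty : N S = ∅ := by
      rw [Finset.eq_empty_iff_forall_notMem]
      intro i hi
      exact hN S i hi (hSuniv ▸ Finset.mem_univ i)
    rw [hrec S hS, hNempty]
    simp [hSuniv]
  | succ k ih =>
    intro S hS hcard
    rw [hrec S hS, le_div_iff₀ (hden S hS)]
    have hSle : (∑ i ∈ S, r i) ≤ ∑ i, r i :=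
      Finset.sum_le_sum_of_subset_of_nonneg (Finset.subset_univ S) (fun i _ _ => hr i)
    have h1 : lamE / (∑ i, r i) * (∑ i ∈ S, r i) ≤ lamE := by
      calc lamE / (∑ i, r i) * (∑ i ∈ S, r i)
          ≤ lamE / (∑ i, r i) * (∑ i, r i) := mul_le_mul_of_nonneg_left hSle hc0
        _ = lamE := div_mul_cancel₀ lamE hrpos.ne'
    have h2 : lamE / (∑ i, r i) * (∑ i ∈ N S, μ i S) ≤
        ∑ i ∈ N S, μ i S * v (insert i S) := by
      rw [Finset.mul_sum]
      apply Finset.sum_le_sum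
      intro i hi
      have hiS := hN S i hi
      have hins : (insert i S).card = S.card + 1 := Finset.card_insert_of_notMem hiS
      have hcardle : (insert i S).card ≤ n := by
        simpa using Finset.card_le_card (Finset.subset_univ (insert i S))
      have hv := ih (insert i S) ⟨i, Finset.mem_insert_self i S⟩ (by omega)
      calc lamE / (∑ i, r i) * μ i S = μ i S * (lamE / (∑ i, r i)) := mul_comm _ _
        _ ≤ μ i S * v (insert i S) := mul_le_mul_of_nonneg_left hv (hμ i S)
    rw [mul_add]
    linarith
end
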